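/- arXiv:2203.15761 — 2 statements merged into one kernel-verified Lean document; each statement's English description precedes it below -/
import Mathlib

section
/- Let P(R) be the space of Borel probability measures on R with the topology of weak convergence. The set (D_0 minus M), consisting of all distributions F that belong to the maximum domain of attraction D(G_0) of the Gumbel distribution and have infinite right endpoint x_F = infty, is a set of the first Baire category (i.e., meagre) in P(R). -/
/-!
Cover the set by the countably many sets `tailHalvesFrom N` of laws whose tail at least halves
whenever the argument doubles beyond `N`. Each is closed by the portmanteau theorem, and has
dense complement: mixing in a small atom far out breaks the inequality at one point while moving
the law arbitrarily little. The cover works because a law in `D(G_0)` with infinite endpoint has a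
rapidly varying tail. Take `n ≈ 1 / (4 (1 - F x))` and compare `F ^ n` with its Gumbel limits: the
limit at `0` puts `x` above `b_n`; if the tail at `2 x` were more than half the tail at `x`, the
limit at `8` would put `2 x` below `b_n + 8 a_n`; and the limit at `-8` (against `F 0 ^ n → 0`)
gives `b_n + 8 a_n < 2 b_n`.
-/

open MeasureTheory Filter Topology Set NNReal

/-- The cumulative distribution function of a Borel probability measure on `ℝ`:
`F(x) = μ((-∞, x])`. -/
noncomputable def distrib (μ : ProbabilityMeasure ℝ) (x : ℝ) : ℝ :=
  (μ (Set.Iic x) : ℝ≥0)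

/-- The generalized extreme value distribution function `G_γ`, with
`G_γ(x) = exp(-(1+γx)^(-1/γ))` where `1 + γx > 0` (interpreted as
`G_0(x) = exp(-e^(-x))` when `γ = 0`). -/
noncomputable def evCdf (γ : ℝ) (x : ℝ) : ℝ :=
  if γ = 0 then Real.exp (-Real.exp (-x))
  else if 0 < 1 + γ * x then Real.exp (-(1 + γ * x) ^ (-1 / γ))
  else if 0 < γ then 0 else 1

/-- `μ` belongs to the maximum domain of attraction `D(G_γ)`: there are `a n > 0` and `b n`
such that `(F (a n * x + b n)) ^ n → G_γ x` at every continuity point `x` of `G_γ`. -/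
def MemDomAttr (γ : ℝ) (μ : ProbabilityMeasure ℝ) : Prop :=
  ∃ a b : ℕ → ℝ, (∀ n, 0 < a n) ∧
    ∀ x : ℝ, ContinuousAt (evCdf γ) x →
      Tendsto (fun n : ℕ => distrib μ (a n * x + b n) ^ n) atTop (𝓝 (evCdf γ x))

/-- The right endpoint `x_F = sup {x : F x < 1}` of a distribution, as an extended real. -/
noncomputable def rightEndpoint (μ : ProbabilityMeasure ℝ) : EReal :=
  sSup ((fun x : ℝ => (x : EReal)) '' {x : ℝ | distrib μ x < 1})

open scoped ENNReal unitInterval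

namespace MeasureTheory.ProbabilityMeasure

variable {Ω : Type*} [MeasurableSpace Ω]

noncomputable def mixture (t : I) (ν μ : ProbabilityMeasure Ω) : ProbabilityMeasure Ω :=
  ⟨unitInterval.toNNReal t • (ν : Measure Ω) + unitInterval.toNNReal (σ t) • (μ : Measure Ω),
    inferInstance⟩

lemma toMeasure_mixture_apply (t : I) (ν μ : ProbabilityMeasure Ω) (s : Set Ω) :
    (mixture t ν μ : Measure Ω) s =
      ENNReal.ofReal t * (ν : Measure Ω) s + ENNReal.ofReal (1 - t) * (μ : Measure Ω) s := by
  simp [mixture, ENNReal.smul_def, ← ENNReal.ofReal_coe_nnreal]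

lemma integral_mixture (t : I) (ν μ : ProbabilityMeasure Ω) {f : Ω → ℝ}
    (hν : Integrable f ν) (hμ : Integrable f μ) :
    ∫ ω, f ω ∂(mixture t ν μ : Measure Ω) =
      t * ∫ ω, f ω ∂(ν : Measure Ω) + (1 - t) * ∫ ω, f ω ∂(μ : Measure Ω) := by
  rw [mixture, coe_mk, integral_add_measure (hν.smul_measure_nnreal) (hμ.smul_measure_nnreal),
    integral_smul_nnreal_measure, integral_smul_nnreal_measure]
  simp [NNReal.smul_def]

lemma tendsto_mixture [TopologicalSpace Ω] [OpensMeasurableSpace Ω] {ι : Type*} {l : Filter ι}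
    {t : ι → I} (ht : Tendsto t l (𝓝 0)) (ν : ι → ProbabilityMeasure Ω)
    (μ : ProbabilityMeasure Ω) : Tendsto (fun i ↦ mixture (t i) (ν i) μ) l (𝓝 μ) := by
  rw [tendsto_iff_forall_integral_tendsto]
  intro f
  simp_rw [integral_mixture _ _ _ (f.integrable _) (f.integrable _)]
  have ht' : Tendsto (fun i ↦ (t i : ℝ)) l (𝓝 0) := (continuous_subtype_val.tendsto 0).comp ht
  have hν : Tendsto (fun i ↦ (t i : ℝ) * ∫ ω, f ω ∂(ν i : Measure Ω)) l (𝓝 0) := by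
    refine squeeze_zero_norm (fun i ↦ ?_) (ht'.mul_const ‖f‖ |>.trans (by simp))
    rw [norm_mul, Real.norm_of_nonneg (t i).2.1]
    exact mul_le_mul_of_nonneg_left (f.norm_integral_le_norm _) (t i).2.1
  have hμ := ((tendsto_const_nhds (x := (1 : ℝ))).sub ht').mul_const (∫ ω, f ω ∂(μ : Measure Ω))
  simpa using hν.add hμ

lemma isClosed_setOf_const_mul_le [TopologicalSpace Ω] [OpensMeasurableSpace Ω]
    [HasOuterApproxClosed Ω] {G C : Set Ω} (hG : IsOpen G) (hC : IsClosed C) {c : ℝ≥0∞}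
    (hc : c ≠ ∞) :
    IsClosed {μ : ProbabilityMeasure Ω | c * (μ : Measure Ω) G ≤ (μ : Measure Ω) C} := by
  refine isClosed_iff_ultrafilter.2 fun μ u hu hmem ↦ ?_
  have hlim : Tendsto id (u : Filter (ProbabilityMeasure Ω)) (𝓝 μ) := hu
  calc c * (μ : Measure Ω) G
      ≤ c * u.liminf fun ν : ProbabilityMeasure Ω ↦ (ν : Measure Ω) G :=
        by gcongr; exact le_liminf_measure_open_of_tendsto hlim hG
    _ = u.liminf fun ν : ProbabilityMeasure Ω ↦ c * (ν : Measure Ω) G :=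
        (ENNReal.liminf_const_mul_of_ne_top hc).symm
    _ ≤ u.liminf fun ν : ProbabilityMeasure Ω ↦ (ν : Measure Ω) C := liminf_le_liminf hmem
    _ ≤ u.limsup fun ν : ProbabilityMeasure Ω ↦ (ν : Measure Ω) C := liminf_le_limsup
    _ ≤ (μ : Measure Ω) C := limsup_measure_closed_le_of_tendsto hlim hC

end MeasureTheory.ProbabilityMeasure

lemma tendsto_measure_Ioi_atTop {α : Type*} [TopologicalSpace α] [LinearOrder α]
    [OrderClosedTopology α] [Nonempty α] [NoMaxOrder α] [(atTop : Filter α).IsCountablyGenerated]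
    [MeasurableSpace α] [OpensMeasurableSpace α] (μ : Measure α) [IsFiniteMeasure μ] :
    Tendsto (fun x ↦ μ (Ioi x)) atTop (𝓝 0) := by
  have hempty : ⋂ x : α, Ioi x = ∅ :=
    eq_empty_iff_forall_notMem.2 fun y hy ↦ by
      obtain ⟨z, hz⟩ := exists_gt y
      exact (mem_iInter.1 hy z).not_gt hz
  simpa [Function.comp_def, hempty] using tendsto_measure_iInter_atTop (μ := μ)
    (fun _ ↦ measurableSet_Ioi.nullMeasurableSet) (fun _ _ h ↦ Ioi_subset_Ioi h)
    ⟨Classical.arbitrary α, measure_ne_top μ _⟩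

section Distrib

variable (μ : ProbabilityMeasure ℝ)

lemma distrib_eq_one_sub_measureReal_Ioi (x : ℝ) :
    distrib μ x = 1 - (μ : Measure ℝ).real (Ioi x) := by
  rw [← compl_Iic, probReal_compl_eq_one_sub measurableSet_Iic, sub_sub_cancel,
    ProbabilityMeasure.measureReal_eq_coe_coeFn, distrib]

lemma distrib_nonneg (x : ℝ) : 0 ≤ distrib μ x := NNReal.coe_nonneg _

lemma distrib_mono : Monotone (distrib μ) :=
  fun _ _ h ↦ NNReal.coe_le_coe.2 (μ.apply_mono (Iic_subset_Iic.2 h))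

variable {μ}

lemma distrib_lt_one_of_rightEndpoint_eq_top (h : rightEndpoint μ = ⊤) (x : ℝ) :
    distrib μ x < 1 := by
  by_contra! hx
  have : rightEndpoint μ ≤ x := by
    refine sSup_le ?_
    rintro _ ⟨y, hy, rfl⟩
    exact EReal.coe_le_coe_iff.2 (le_of_not_gt fun hxy ↦
      (hy.trans_le hx).not_ge (distrib_mono μ hxy.le))
  simp [h] at this

end Distrib

lemma eventually_forall_lt_of_tendsto {ι α β : Type*} [LinearOrder α] [LinearOrder β]
    [TopologicalSpace β] [OrderTopology β] {l : Filter ι} {g : ι → α → β}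
    (hg : ∀ i, Monotone (g i)) {y : ι → α} {L L' : β}
    (hy : Tendsto (fun i ↦ g i (y i)) l (𝓝 L)) (hL : L' < L) :
    ∀ᶠ i in l, ∀ z, g i z ≤ L' → z < y i := by
  filter_upwards [hy.eventually_const_lt hL] with i hi z hz
  exact (hg i).reflect_lt (hz.trans_lt hi)

lemma eventually_forall_gt_of_tendsto {ι α β : Type*} [LinearOrder α] [LinearOrder β]
    [TopologicalSpace β] [OrderTopology β] {l : Filter ι} {g : ι → α → β}
    (hg : ∀ i, Monotone (g i)) {y : ι → α} {L L' : β}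
    (hy : Tendsto (fun i ↦ g i (y i)) l (𝓝 L)) (hL : L < L') :
    ∀ᶠ i in l, ∀ z, L' ≤ g i z → y i < z := by
  filter_upwards [hy.eventually_lt_const hL] with i hi z hz
  exact (hg i).reflect_lt (hi.trans_le hz)

lemma half_le_one_sub_pow_ceil {t : ℝ} (ht : 0 < t) (ht' : t ≤ 1 / 4) :
    1 / 2 ≤ (1 - t) ^ ⌈1 / (4 * t)⌉₊ := by
  set n := ⌈1 / (4 * t)⌉₊
  have hn : (n : ℝ) * t ≤ 1 / 2 := calc
    (n : ℝ) * t ≤ (1 / (4 * t) + 1) * t := by gcongr; exact (Nat.ceil_lt_add_one (by positivity)).le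
    _ = 1 / 4 + t := by field_simp
    _ ≤ 1 / 2 := by linarith
  calc 1 / 2 ≤ 1 + n * (-t) := by linarith
    _ ≤ (1 - t) ^ n := by rw [sub_eq_add_neg]; exact one_add_mul_le_pow (by linarith) n

lemma one_sub_pow_ceil_le {s t : ℝ} (ht : 0 < t) (hs : s ≤ 1) (hts : t ≤ 2 * s) :
    (1 - s) ^ ⌈1 / (4 * t)⌉₊ ≤ Real.exp (-(1 / 8)) := by
  set n := ⌈1 / (4 * t)⌉₊
  have hn : 1 / 8 ≤ (n : ℝ) * s := calc
    (1 : ℝ) / 8 = 1 / (4 * t) * t / 2 := by field_simp; norm_num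
    _ ≤ n * (2 * s) / 2 := by gcongr; exact Nat.le_ceil _
    _ = n * s := by ring
  calc (1 - s) ^ n ≤ Real.exp (-s) ^ n := by
        gcongr
        exact Real.one_sub_le_exp_neg s
    _ = Real.exp (-(n * s)) := by rw [← Real.exp_nat_mul]; ring_nf
    _ ≤ Real.exp (-(1 / 8)) := by gcongr

-- Open set on the left, closed set on the right: this makes the condition weakly closed.
def tailHalvesFrom (N : ℝ) : Set (ProbabilityMeasure ℝ) :=
  {μ | ∀ x, N ≤ x → 2 * (μ : Measure ℝ) (Ioi (2 * x)) ≤ (μ : Measure ℝ) (Ici x)}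

lemma isClosed_tailHalvesFrom (N : ℝ) : IsClosed (tailHalvesFrom N) := by
  simp only [tailHalvesFrom, ofPred_forall]
  exact isClosed_iInter fun _ ↦ isClosed_iInter fun _ ↦
    ProbabilityMeasure.isClosed_setOf_const_mul_le isOpen_Ioi isClosed_Ici ENNReal.ofNat_ne_top

lemma mixture_diracProba_notMem_tailHalvesFrom (μ : ProbabilityMeasure ℝ) {N x : ℝ} (hx : N ≤ x)
    {t : I} (ht : (μ : Measure ℝ) (Ici x) < ENNReal.ofReal t) :
    ProbabilityMeasure.mixture t (diracProba (2 * x + 1)) μ ∉ tailHalvesFrom N := by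
  intro h
  have hfar := h x hx
  simp only [ProbabilityMeasure.toMeasure_mixture_apply,
    diracProba_toMeasure_apply_of_mem (show 2 * x + 1 ∈ Ioi (2 * x) by simp)] at hfar
  set ε := ENNReal.ofReal t
  have hweight : ENNReal.ofReal (1 - t) ≤ 1 := by simpa using (t.2.1 : (0 : ℝ) ≤ t)
  have : 2 * ε < 2 * ε := calc
    2 * ε ≤ 2 * (ε * 1 + ENNReal.ofReal (1 - t) * (μ : Measure ℝ) (Ioi (2 * x))) := by
      gcongr; simp
    _ ≤ ε * (diracProba (2 * x + 1) : Measure ℝ) (Ici x)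
        + ENNReal.ofReal (1 - t) * (μ : Measure ℝ) (Ici x) := hfar
    _ ≤ ε * 1 + 1 * (μ : Measure ℝ) (Ici x) := by gcongr; exact prob_le_one
    _ < 2 * ε := by
      rw [mul_one, one_mul, two_mul]
      exact ENNReal.add_lt_add_left ENNReal.ofReal_ne_top ht
  exact this.false

lemma dense_compl_tailHalvesFrom (N : ℝ) : Dense (tailHalvesFrom N)ᶜ := by
  intro μ
  let t : ℕ → I := fun k ↦ ⟨1 / (k + 2), unitInterval.div_mem zero_le_one (by positivity)
    (by linarith [(k.cast_nonneg : (0 : ℝ) ≤ k)])⟩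
  have ht : Tendsto t atTop (𝓝 0) := by
    refine tendsto_subtype_rng.2 ?_
    refine ((tendsto_one_div_add_atTop_nhds_zero_nat (𝕜 := ℝ)).comp
      (tendsto_add_atTop_nat 1)).congr fun k ↦ ?_
    simp [t, add_assoc, one_add_one_eq_two]
  have hfar : ∀ k, ∃ x, N ≤ x ∧ (μ : Measure ℝ) (Ici x) < ENNReal.ofReal (t k) := fun k ↦ by
    have hpos : 0 < ENNReal.ofReal (t k) := ENNReal.ofReal_pos.2 (by simp [t]; positivity)
    obtain ⟨y, hy, hNy⟩ := ((tendsto_measure_Ioi_atTop (μ : Measure ℝ)).eventually_lt_const hpos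
      |>.and (eventually_ge_atTop N)).exists
    exact ⟨y + 1, by linarith, (measure_mono (Ici_subset_Ioi.2 (lt_add_one y))).trans_lt hy⟩
  choose x hxN hx using hfar
  exact mem_closure_of_tendsto (ProbabilityMeasure.tendsto_mixture ht _ μ)
    (Eventually.of_forall fun k ↦ mixture_diracProba_notMem_tailHalvesFrom μ (hxN k) (hx k))

lemma isNowhereDense_tailHalvesFrom (N : ℝ) : IsNowhereDense (tailHalvesFrom N) :=
  (isClosed_isNowhereDense_iff_compl.2
    ⟨(isClosed_tailHalvesFrom N).isOpen_compl, dense_compl_tailHalvesFrom N⟩).2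

namespace MemDomAttr

variable {μ : ProbabilityMeasure ℝ}

lemma exists_tendsto_gumbel (h : MemDomAttr 0 μ) : ∃ a b : ℕ → ℝ, ∀ x,
    Tendsto (fun n ↦ distrib μ (a n * x + b n) ^ n) atTop (𝓝 (Real.exp (-Real.exp (-x)))) := by
  have hG : evCdf 0 = fun x ↦ Real.exp (-Real.exp (-x)) := funext fun x ↦ by simp [evCdf]
  obtain ⟨a, b, -, hab⟩ := h
  simp only [hG] at hab
  exact ⟨a, b, fun x ↦ hab x (by fun_prop)⟩

lemma exists_quantile_window (h : MemDomAttr 0 μ) (h0 : distrib μ 0 < 1) :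
    ∃ b c : ℕ → ℝ, ∀ᶠ n in atTop, (∀ z, 1 / 2 ≤ distrib μ z ^ n → b n < z) ∧
      (∀ z, distrib μ z ^ n ≤ Real.exp (-(1 / 8)) → z < c n) ∧ c n < 2 * b n := by
  obtain ⟨a, b, hab⟩ := h.exists_tendsto_gumbel
  have hmono : ∀ n, Monotone fun z ↦ distrib μ z ^ n :=
    fun n _ _ hz ↦ pow_le_pow_left₀ (distrib_nonneg μ _) (distrib_mono μ hz) n
  have hG0 : Real.exp (-Real.exp (-0)) < 1 / 2 := by
    rw [neg_zero, Real.exp_zero, Real.exp_neg, inv_lt_comm₀ (Real.exp_pos 1) (by norm_num)]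
    linarith [Real.exp_one_gt_two]
  have hG8 : Real.exp (-(1 / 8)) < Real.exp (-Real.exp (-8)) := by
    rw [Real.exp_lt_exp, neg_lt_neg_iff, Real.exp_neg, inv_lt_comm₀ (Real.exp_pos 8) (by norm_num)]
    linarith [Real.add_one_le_exp 8]
  have hGpos : 0 < Real.exp (-Real.exp (-(-8))) / 2 := by positivity
  have hpow0 : Tendsto (fun n : ℕ ↦ distrib μ 0 ^ n) atTop (𝓝 0) :=
    tendsto_pow_atTop_nhds_zero_of_lt_one (distrib_nonneg μ 0) h0
  refine ⟨b, fun n ↦ a n * 8 + b n, ?_⟩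
  filter_upwards [eventually_forall_gt_of_tendsto hmono (by simpa using hab 0) hG0,
    eventually_forall_lt_of_tendsto hmono (hab 8) hG8,
    eventually_forall_gt_of_tendsto hmono hpow0 hGpos,
    (hab (-8)).eventually_const_le (_root_.half_lt_self (by positivity))] with n hb hc hw hw'
  exact ⟨hb, hc, by linarith [hw _ hw']⟩

lemma eventually_two_mul_measureReal_Ioi_le (h : MemDomAttr 0 μ)
    (hF : ∀ x, distrib μ x < 1) :
    ∀ᶠ x in atTop, 2 * (μ : Measure ℝ).real (Ioi (2 * x)) ≤ (μ : Measure ℝ).real (Ioi x) := by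
  set T := fun x ↦ (μ : Measure ℝ).real (Ioi x)
  have hT0 : ∀ x, 0 < T x := fun x ↦ by
    have := hF x
    rw [distrib_eq_one_sub_measureReal_Ioi] at this
    linarith
  have hT : Tendsto T atTop (𝓝[>] 0) := by
    refine tendsto_nhdsWithin_iff.2 ⟨?_, Eventually.of_forall hT0⟩
    simpa [T, Function.comp_def, Measure.real] using
      (ENNReal.tendsto_toReal ENNReal.zero_ne_top).comp (tendsto_measure_Ioi_atTop (μ : Measure ℝ))
  have hn : Tendsto (fun x ↦ ⌈1 / (4 * T x)⌉₊) atTop atTop := by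
    refine tendsto_nat_ceil_atTop.comp ?_
    simpa [one_div, mul_inv] using (tendsto_inv_nhdsGT_zero.comp hT).atTop_mul_const
      (show (0 : ℝ) < 4⁻¹ by norm_num)
  obtain ⟨b, c, hbc⟩ := h.exists_quantile_window (hF 0)
  filter_upwards [hn.eventually hbc, (hT.mono_right nhdsWithin_le_nhds).eventually
    (ge_mem_nhds (show (0 : ℝ) < 1 / 4 by norm_num))] with x ⟨hb, hc, hcb⟩ hx
  by_contra! hlt
  have hbx := hb x (by
    rw [distrib_eq_one_sub_measureReal_Ioi]
    exact half_le_one_sub_pow_ceil (hT0 x) hx)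
  have hxc := hc (2 * x) (by
    rw [distrib_eq_one_sub_measureReal_Ioi]
    exact one_sub_pow_ceil_le (hT0 x) measureReal_le_one hlt.le)
  linarith

lemma exists_mem_tailHalvesFrom (h : MemDomAttr 0 μ) (hF : ∀ x, distrib μ x < 1) :
    ∃ N : ℕ, μ ∈ tailHalvesFrom N := by
  obtain ⟨N, hN⟩ := eventually_atTop.1 (h.eventually_two_mul_measureReal_Ioi_le hF)
  obtain ⟨M, hM⟩ := exists_nat_ge N
  refine ⟨M, fun x hx ↦ ?_⟩
  rw [← ENNReal.toReal_le_toReal (by finiteness) (measure_ne_top _ _), ENNReal.toReal_mul]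
  exact (hN x (hM.trans hx)).trans (measureReal_mono Ioi_subset_Ici_self)

end MemDomAttr

/-- The set `D_0 \ M` of distributions on `ℝ` that lie in the maximum domain of
attraction of the Gumbel distribution `G_0` and have infinite right endpoint is meagre
(of the first Baire category) in the space of Borel probability measures on `ℝ` with the
topology of weak convergence. -/
theorem meagre_gumbel_domain_of_attraction_infinite_endpoint :
    IsMeagre {μ : ProbabilityMeasure ℝ | MemDomAttr 0 μ ∧ rightEndpoint μ = ⊤} := by
  refine (isMeagre_iUnion fun N : ℕ ↦ (isNowhereDense_tailHalvesFrom N).isMeagre).mono ?_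
  rintro μ ⟨hdom, htop⟩
  exact mem_iUnion.2 (hdom.exists_mem_tailHalvesFrom (distrib_lt_one_of_rightEndpoint_eq_top htop))
end

section
/- Let P(R) be the space of Borel probability measures on R with the topology of weak convergence. The set D of all probability measures on R that belong to the maximum domain of attraction of some extreme value distribution is not a closed subset of P(R). -/
open MeasureTheory Filter Topology Set NNReal

/-! Mapping the Gumbel law by `x ↦ x / (n + 1)` gives laws in `D(G_0)` that converge weakly to the
point mass `δ₀`. But `δ₀ ∉ D`: its distribution function only takes the values `0` and `1`, so
`F(a_n x + b_n)^n ∈ {0, 1}` can never tend to `G_γ(0) = e⁻¹`. -/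

lemma distrib_eq_toReal (μ : ProbabilityMeasure ℝ) (x : ℝ) :
    distrib μ x = (μ.toMeasure (Iic x)).toReal := rfl

lemma evCdf_zero_left (x : ℝ) : evCdf 0 x = Real.exp (-Real.exp (-x)) := if_pos rfl

lemma evCdf_zero_right (γ : ℝ) : evCdf γ 0 = Real.exp (-1) := by
  by_cases h : γ = 0 <;> simp [evCdf, h, Real.one_rpow]

lemma continuousAt_evCdf_zero (γ : ℝ) : ContinuousAt (evCdf γ) 0 := by
  by_cases h : γ = 0
  · subst h
    simp only [funext evCdf_zero_left]
    fun_prop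
  · have hpos : ∀ᶠ x : ℝ in 𝓝 0, 0 < 1 + γ * x :=
      ContinuousAt.eventually_lt (f := fun _ => 0) continuousAt_const (by fun_prop) (by simp)
    have hcont : ContinuousAt (fun x : ℝ => Real.exp (-(1 + γ * x) ^ (-1 / γ))) 0 :=
      ((ContinuousAt.rpow_const (by fun_prop) (Or.inl (by simp))).neg).rexp
    refine hcont.congr ?_
    filter_upwards [hpos] with x hx
    simp [evCdf, h, hx]

/-- `G₀` is max-stable. -/
lemma evCdf_zero_add_log_pow (x : ℝ) {n : ℕ} (hn : n ≠ 0) :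
    evCdf 0 (x + Real.log n) ^ n = evCdf 0 x := by
  have hn' : (0 : ℝ) < n := by positivity
  rw [evCdf_zero_left, evCdf_zero_left, ← Real.exp_nat_mul, neg_add, Real.exp_add,
    Real.exp_neg (Real.log n), Real.exp_log hn']
  field_simp

noncomputable def gumbelCdf : StieltjesFunction ℝ where
  toFun x := Real.exp (-Real.exp (-x))
  mono' _ _ hxy := Real.exp_le_exp.2 (neg_le_neg (Real.exp_le_exp.2 (neg_le_neg hxy)))
  right_continuous' _ := (by fun_prop : Continuous fun x : ℝ => Real.exp (-Real.exp (-x)))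
    |>.continuousWithinAt

lemma tendsto_gumbelCdf_atBot : Tendsto gumbelCdf atBot (𝓝 0) :=
  Real.tendsto_exp_atBot.comp <| tendsto_neg_atTop_atBot.comp <|
    Real.tendsto_exp_atTop.comp tendsto_neg_atBot_atTop

lemma tendsto_gumbelCdf_atTop : Tendsto gumbelCdf atTop (𝓝 1) := by
  have h : Tendsto gumbelCdf atTop (𝓝 (Real.exp (-0))) :=
    ((Real.tendsto_exp_atBot.comp tendsto_neg_atTop_atBot).neg).rexp
  rwa [neg_zero, Real.exp_zero] at h

noncomputable def gumbel : ProbabilityMeasure ℝ :=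
  ⟨gumbelCdf.measure, gumbelCdf.isProbabilityMeasure tendsto_gumbelCdf_atBot
    tendsto_gumbelCdf_atTop⟩

lemma distrib_gumbel (x : ℝ) : distrib gumbel x = evCdf 0 x := by
  rw [distrib_eq_toReal, evCdf_zero_left]
  change (gumbelCdf.measure (Iic x)).toReal = _
  rw [gumbelCdf.measure_Iic tendsto_gumbelCdf_atBot, sub_zero]
  exact ENNReal.toReal_ofReal (Real.exp_nonneg _)

lemma memDomAttr_zero_gumbel : MemDomAttr 0 gumbel := by
  refine ⟨fun _ => 1, fun n => Real.log n, fun _ => one_pos, fun x _ => ?_⟩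
  refine tendsto_const_nhds.congr' ?_
  filter_upwards [eventually_ne_atTop 0] with n hn
  rw [one_mul, distrib_gumbel, evCdf_zero_add_log_pow x hn]

lemma distrib_map_const_mul (μ : ProbabilityMeasure ℝ) {c : ℝ} (hc : 0 < c) (x : ℝ) :
    distrib (μ.map (measurable_const_mul c).aemeasurable) x = distrib μ (x / c) := by
  have hpre : (fun y : ℝ => c * y) ⁻¹' Iic x = Iic (x / c) := by
    ext y
    simp [le_div_iff₀ hc, mul_comm]
  simp only [distrib_eq_toReal, ProbabilityMeasure.toMeasure_map,
    Measure.map_apply (measurable_const_mul c) measurableSet_Iic, hpre]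

lemma MemDomAttr.map_const_mul {γ : ℝ} {μ : ProbabilityMeasure ℝ} (hμ : MemDomAttr γ μ)
    {c : ℝ} (hc : 0 < c) : MemDomAttr γ (μ.map (measurable_const_mul c).aemeasurable) := by
  obtain ⟨a, b, ha, hlim⟩ := hμ
  refine ⟨fun n => c * a n, fun n => c * b n, fun n => mul_pos hc (ha n), fun x hx => ?_⟩
  convert hlim x hx using 3 with n
  rw [distrib_map_const_mul μ hc]
  congr 1
  field_simp

lemma tendsto_map_const_mul_diracProba_zero {ι : Type*} {l : Filter ι} [l.IsCountablyGenerated]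
    (ν : ProbabilityMeasure ℝ) {c : ι → ℝ} (hc : Tendsto c l (𝓝 0)) :
    Tendsto (fun i => ν.map (measurable_const_mul (c i)).aemeasurable) l
      (𝓝 (diracProba 0)) := by
  have hdirac : diracProba (0 : ℝ) = ν.map (measurable_const (a := (0 : ℝ))).aemeasurable :=
    Subtype.ext (by simp [diracProba, Measure.map_const])
  rw [hdirac]
  exact (tendstoInDistribution_of_ae_tendsto (μ' := (ν : Measure ℝ))
    (X := fun i x => c i * x) (Z := fun _ => (0 : ℝ)) (fun i => by fun_prop) (by fun_prop)
    (.of_forall fun x => by simpa using hc.mul_const x)).tendsto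

lemma not_memDomAttr_diracProba (γ a : ℝ) : ¬ MemDomAttr γ (diracProba a) := by
  rintro ⟨α, β, -, hlim⟩
  have hvals : ∀ y, distrib (diracProba a) y ∈ ({0, 1} : Set ℝ) := fun y => by
    by_cases hy : a ≤ y <;> simp [distrib_eq_toReal, hy]
  have hpow : ∀ n : ℕ, distrib (diracProba a) (α n * 0 + β n) ^ n ∈ ({0, 1} : Set ℝ) :=
    fun n => by
      rcases hvals (α n * 0 + β n) with h | h <;> rw [h]
      · rcases n with _ | n <;> simp
      · simp
  have hlimit := (Set.toFinite _).isClosed.mem_of_tendsto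
    (hlim 0 (continuousAt_evCdf_zero γ)) (.of_forall hpow)
  rw [evCdf_zero_right] at hlimit
  rcases hlimit with h | h
  · exact (Real.exp_pos _).ne' h
  · exact (Real.exp_lt_one_iff.2 (by norm_num : (-1 : ℝ) < 0)).ne h

/-- The set `D` of distributions on `ℝ` in the maximum domain of attraction of some
extreme value distribution is not closed in the space of Borel probability measures on
`ℝ` with the topology of weak convergence. -/
theorem not_isClosed_domain_of_attraction :
    ¬ IsClosed {μ : ProbabilityMeasure ℝ | ∃ γ : ℝ, MemDomAttr γ μ} := by
  intro hclosed
  obtain ⟨γ, hγ⟩ := hclosed.mem_of_tendsto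
    (tendsto_map_const_mul_diracProba_zero gumbel tendsto_one_div_add_atTop_nhds_zero_nat)
    (.of_forall fun n => ⟨0, memDomAttr_zero_gumbel.map_const_mul (by positivity)⟩)
  exact not_memDomAttr_diracProba γ 0 hγ
end
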